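/- Let n⁺ and n⁻ be natural numbers, let N = max(n⁺, n⁻), and let a < b < c be real numbers. Let p be a real polynomial of degree at most n⁺ (associated with the element [a,b]) and q a real polynomial of degree at most n⁻ (associated with the element [b,c]). Then the arithmetic average of the derivative values at the shared point b satisfies: ((p'(b) + q'(b))/2)^2 ≤ (N^2/2) · ( (1/(b-a)) ∫_a^b (p'(x))^2 dx + (1/(c-b)) ∫_b^c (q'(x))^2 dx ). -/

import Mathlib

/-!
Averaging costs nothing beyond convexity, `((x + y) / 2)² ≤ (x² + y²) / 2`, so everything rests on
the sharp one-element inverse trace inequality `r(a)² ≤ (d + 1)² / |b - a| · ∫ r²` for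
`deg r ≤ d`, applied to `r = p'` and `r = q'` with `d + 1 = N`. After an affine change of
variables this is `s(0)² ≤ (d + 1)² ∫₀¹ s²`. With the shifted Legendre polynomials `Pₖ`
(orthogonal on `[0, 1]`, `Pₖ(0) = 1`, `∫₀¹ Pₖ² = 1 / (2k + 1)`), the kernel
`K = ∑_{k ≤ d} (2k + 1) Pₖ` reproduces evaluation at `0`: `∫₀¹ K s = s(0)`. Cauchy–Schwarz then
gives `s(0)² ≤ ∫₀¹ K² · ∫₀¹ s² = K(0) ∫₀¹ s² = (d + 1)² ∫₀¹ s²`.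
-/

open MeasureTheory Polynomial Nat

theorem integral_pow_mul_one_sub_pow (m n : ℕ) :
    ∫ x in (0 : ℝ)..1, x ^ m * (1 - x) ^ n = (m ! * n ! / (m + n + 1)! : ℝ) := by
  have h := Complex.betaIntegral_eq_Gamma_mul_div (m + 1) (n + 1)
    (by simp only [Complex.add_re, Complex.natCast_re, Complex.one_re]; positivity)
    (by simp only [Complex.add_re, Complex.natCast_re, Complex.one_re]; positivity)
  simp only [Complex.betaIntegral, add_sub_cancel_right, Complex.cpow_natCast] at h
  rw [show (m : ℂ) + 1 + (n + 1) = ((m + n + 1 : ℕ) : ℂ) + 1 by push_cast; ring] at h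
  simp only [Complex.Gamma_nat_eq_factorial] at h
  rw [← Complex.ofReal_inj, ← intervalIntegral.integral_ofReal]
  push_cast at h ⊢
  exact h

theorem sq_integral_mul_le {f g : ℝ → ℝ} {a b : ℝ} (hab : a ≤ b)
    (hf : IntervalIntegrable (fun x => f x ^ 2) volume a b)
    (hg : IntervalIntegrable (fun x => g x ^ 2) volume a b)
    (hfg : IntervalIntegrable (fun x => f x * g x) volume a b) :
    (∫ x in a..b, f x * g x) ^ 2 ≤ (∫ x in a..b, f x ^ 2) * ∫ x in a..b, g x ^ 2 := by
  have hquad : ∀ t : ℝ, 0 ≤ (∫ x in a..b, g x ^ 2) * (t * t)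
      + 2 * (∫ x in a..b, f x * g x) * t + ∫ x in a..b, f x ^ 2 := by
    intro t
    have hexpand : (fun x => (f x + t * g x) ^ 2)
        = fun x => (t * t) * g x ^ 2 + (2 * t) * (f x * g x) + f x ^ 2 := by
      funext x; ring
    have hnonneg : 0 ≤ ∫ x in a..b, (f x + t * g x) ^ 2 :=
      intervalIntegral.integral_nonneg hab fun x _ => sq_nonneg _
    rw [hexpand, intervalIntegral.integral_add ((hg.const_mul _).add (hfg.const_mul _)) hf,
      intervalIntegral.integral_add (hg.const_mul _) (hfg.const_mul _),
      intervalIntegral.integral_const_mul, intervalIntegral.integral_const_mul] at hnonneg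
    linarith
  have := discrim_le_zero hquad
  rw [discrim] at this
  linarith

theorem integral_iterate_derivative_mul {f : ℝ[X]} {a b : ℝ} {n : ℕ}
    (hf : ∀ i < n, (derivative^[i] f).IsRoot a ∧ (derivative^[i] f).IsRoot b) (g : ℝ[X]) :
    ∫ x in a..b, (derivative^[n] f).eval x * g.eval x =
      (-1) ^ n * ∫ x in a..b, f.eval x * (derivative^[n] g).eval x := by
  induction n generalizing g with
  | zero => simp
  | succ n ih =>
    obtain ⟨hfa, hfb⟩ := hf n n.lt_succ_self
    have hparts := intervalIntegral.integral_mul_deriv_eq_deriv_mul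
      (fun x _ => g.hasDerivAt x) (fun x _ => (derivative^[n] f).hasDerivAt x)
      ((derivative g).continuous.intervalIntegrable a b)
      ((derivative (derivative^[n] f)).continuous.intervalIntegrable a b)
    rw [hfa.eq_zero, hfb.eq_zero, mul_zero, mul_zero, sub_zero, zero_sub] at hparts
    calc ∫ x in a..b, (derivative^[n + 1] f).eval x * g.eval x
        = -∫ x in a..b, (derivative^[n] f).eval x * (derivative g).eval x := by
          simp_rw [Function.iterate_succ_apply', mul_comm _ (g.eval _), hparts, mul_comm]
      _ = (-1) ^ (n + 1) * ∫ x in a..b, f.eval x * (derivative^[n + 1] g).eval x := by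
          rw [ih (fun i hi => hf i (hi.trans n.lt_succ_self)), Function.iterate_succ_apply]
          ring

theorem isRoot_iterate_derivative_X_pow_mul_one_sub_X_pow {R : Type*} [CommRing R] {n i : ℕ}
    (hi : i < n) :
    (derivative^[i] (X ^ n * (1 - X) ^ n : R[X])).IsRoot 0 ∧
      (derivative^[i] (X ^ n * (1 - X) ^ n : R[X])).IsRoot 1 := by
  have hroot : ∀ t : R, (X - C t) ^ n ∣ (X ^ n * (1 - X) ^ n : R[X]) →
      (derivative^[i] (X ^ n * (1 - X) ^ n : R[X])).IsRoot t := fun t ht =>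
    dvd_iff_isRoot.mp <| (dvd_pow_self _ (Nat.sub_ne_zero_of_lt hi)).trans
      (pow_sub_dvd_iterate_derivative_of_pow_dvd i ht)
  refine ⟨hroot 0 ?_, hroot 1 ?_⟩
  · simp
  · refine Dvd.dvd.mul_left (pow_dvd_pow_of_dvd ?_ n) _
    exact ⟨-1, by simp⟩

noncomputable def realShiftedLegendre : Sequence ℝ where
  elems' n := (shiftedLegendre n).map (Int.castRingHom ℝ)
  degree_eq' n := by
    rw [degree_map_eq_of_injective (RingHom.injective_int _), degree_shiftedLegendre]

theorem realShiftedLegendre_apply (n : ℕ) :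
    realShiftedLegendre n = (shiftedLegendre n).map (Int.castRingHom ℝ) := rfl

theorem realShiftedLegendre_eval_zero (n : ℕ) : (realShiftedLegendre n).eval 0 = 1 := by
  simp [← coeff_zero_eq_eval_zero, realShiftedLegendre_apply, coeff_shiftedLegendre]

theorem iterate_derivative_realShiftedLegendre (n : ℕ) :
    derivative^[n] (realShiftedLegendre n) = C ((-1 : ℝ) ^ n * (n ! * (2 * n).choose n)) := by
  have hdeg : (derivative^[n] (realShiftedLegendre n)).natDegree ≤ 0 := by
    simpa using natDegree_iterate_derivative (realShiftedLegendre n) n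
  rw [eq_C_of_natDegree_le_zero hdeg, coeff_iterate_derivative, zero_add, descFactorial_self,
    nsmul_eq_mul, realShiftedLegendre_apply, coeff_map, coeff_shiftedLegendre, choose_self,
    ← two_mul, eq_intCast]
  push_cast
  congr 1
  ring

/-- Rodrigues' formula `n! Pₙ = Dⁿ (xⁿ (1 - x)ⁿ)` and `n` integrations by parts, whose boundary
terms vanish because `xⁿ (1 - x)ⁿ` has roots of order `n` at `0` and `1`. -/
theorem factorial_mul_integral_realShiftedLegendre_mul (n : ℕ) (g : ℝ[X]) :
    n ! * ∫ x in (0 : ℝ)..1, (realShiftedLegendre n).eval x * g.eval x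
      = (-1) ^ n * ∫ x in (0 : ℝ)..1, x ^ n * (1 - x) ^ n * (derivative^[n] g).eval x := by
  have hrodrigues :
      (n ! : ℝ[X]) * realShiftedLegendre n = derivative^[n] (X ^ n * (1 - X) ^ n) := by
    simpa [realShiftedLegendre_apply, ← iterate_derivative_map] using
      congrArg (map (Int.castRingHom ℝ)) (factorial_mul_shiftedLegendre_eq n)
  have h := integral_iterate_derivative_mul (n := n) (a := 0) (b := 1)
    (fun i hi => isRoot_iterate_derivative_X_pow_mul_one_sub_X_pow hi) g
  simpa [← hrodrigues, mul_assoc, intervalIntegral.integral_const_mul] using h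

theorem integral_realShiftedLegendre_mul_eq_zero {n : ℕ} {s : ℝ[X]} (hs : s.natDegree < n) :
    ∫ x in (0 : ℝ)..1, (realShiftedLegendre n).eval x * s.eval x = 0 := by
  simpa [iterate_derivative_eq_zero hs, n.factorial_ne_zero] using
    factorial_mul_integral_realShiftedLegendre_mul n s

theorem integral_realShiftedLegendre_mul_self (n : ℕ) :
    ∫ x in (0 : ℝ)..1, (realShiftedLegendre n).eval x * (realShiftedLegendre n).eval x
      = 1 / (2 * n + 1) := by
  have h := factorial_mul_integral_realShiftedLegendre_mul n (realShiftedLegendre n)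
  simp only [iterate_derivative_realShiftedLegendre, eval_C, intervalIntegral.integral_mul_const,
    integral_pow_mul_one_sub_pow] at h
  have hchoose : ((2 * n).choose n : ℝ) * n ! * n ! = (2 * n)! := by
    exact_mod_cast two_mul n ▸ add_choose_mul_factorial_mul_factorial n n
  have hsucc : ((n + n + 1)! : ℝ) = (2 * n + 1) * (2 * n)! := by
    rw [← two_mul]; push_cast [factorial_succ]; ring
  have hsign : (-1 : ℝ) ^ n * (-1) ^ n = 1 := by rw [← mul_pow]; norm_num
  have hC : ((2 * n).choose n : ℝ) ≠ 0 := cast_ne_zero.mpr (choose_pos (by omega)).ne'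
  refine mul_left_cancel₀ (cast_ne_zero.mpr n.factorial_ne_zero) (h.trans ?_)
  rw [hsucc, ← hchoose]
  field_simp
  linear_combination hsign

theorem intervalIntegrable_eval_mul_eval (f g : ℝ[X]) (a b : ℝ) :
    IntervalIntegrable (fun x => f.eval x * g.eval x) volume a b :=
  Continuous.intervalIntegrable (by fun_prop) a b

noncomputable def endpointKernel (d : ℕ) : ℝ[X] :=
  ∑ k ∈ Finset.range (d + 1), C (2 * k + 1 : ℝ) * realShiftedLegendre k

theorem endpointKernel_eval_zero (d : ℕ) : (endpointKernel d).eval 0 = (d + 1) ^ 2 := by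
  simp only [endpointKernel, eval_finsetSum, eval_mul, eval_C, realShiftedLegendre_eval_zero,
    mul_one]
  induction d with
  | zero => norm_num
  | succ d ih => rw [Finset.sum_range_succ, ih]; push_cast; ring

theorem natDegree_endpointKernel_le (d : ℕ) : (endpointKernel d).natDegree ≤ d :=
  natDegree_sum_le_of_forall_le _ _ fun k hk =>
    (natDegree_C_mul_le _ _).trans <| by
      simpa [Nat.lt_succ_iff] using hk

theorem integral_endpointKernel_mul_realShiftedLegendre {d j : ℕ} (hj : j ≤ d) :
    ∫ x in (0 : ℝ)..1, (endpointKernel d).eval x * (realShiftedLegendre j).eval x = 1 := by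
  have horth : ∀ k ≠ j,
      ∫ x in (0 : ℝ)..1, (realShiftedLegendre k).eval x * (realShiftedLegendre j).eval x = 0 := by
    intro k hkj
    rcases hkj.lt_or_gt with hlt | hgt
    · simp_rw [mul_comm ((realShiftedLegendre k).eval _)]
      exact integral_realShiftedLegendre_mul_eq_zero (by simpa using hlt)
    · exact integral_realShiftedLegendre_mul_eq_zero (by simpa using hgt)
  simp only [endpointKernel, eval_finsetSum, eval_mul, eval_C, Finset.sum_mul, mul_assoc]
  rw [intervalIntegral.integral_finsetSum fun k _ =>
      (intervalIntegrable_eval_mul_eval _ _ _ _).const_mul _]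
  simp_rw [intervalIntegral.integral_const_mul]
  rw [Finset.sum_eq_single_of_mem j (Finset.mem_range.mpr (by omega))
      fun k _ hkj => by rw [horth k hkj, mul_zero],
    integral_realShiftedLegendre_mul_self]
  field_simp

theorem integral_endpointKernel_mul {d : ℕ} {s : ℝ[X]} (hs : s.natDegree ≤ d) :
    ∫ x in (0 : ℝ)..1, (endpointKernel d).eval x * s.eval x = s.eval 0 := by
  have hspan : s ∈ Submodule.span ℝ (realShiftedLegendre '' Set.Iic d) := by
    rw [realShiftedLegendre.span_degreeLE fun i _ =>
      (leadingCoeff_ne_zero.mpr (Sequence.ne_zero _ i)).isUnit]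
    exact mem_degreeLE.mpr (natDegree_le_iff_degree_le.mp hs)
  clear hs
  induction hspan using Submodule.span_induction with
  | mem _ h =>
    obtain ⟨j, hj, rfl⟩ := h
    rw [integral_endpointKernel_mul_realShiftedLegendre hj, realShiftedLegendre_eval_zero]
  | zero => simp
  | add f g _ _ hf hg =>
    simp only [eval_add, mul_add]
    rw [intervalIntegral.integral_add (intervalIntegrable_eval_mul_eval _ _ _ _)
      (intervalIntegrable_eval_mul_eval _ _ _ _), hf, hg]
  | smul c f _ hf =>
    simp only [eval_smul, smul_eq_mul, mul_left_comm _ c, intervalIntegral.integral_const_mul, hf]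

theorem sq_eval_zero_le {d : ℕ} {s : ℝ[X]} (hs : s.natDegree ≤ d) :
    s.eval 0 ^ 2 ≤ (d + 1) ^ 2 * ∫ x in (0 : ℝ)..1, s.eval x ^ 2 := by
  have hK := integral_endpointKernel_mul (natDegree_endpointKernel_le d)
  simp_rw [endpointKernel_eval_zero, ← sq] at hK
  rw [← integral_endpointKernel_mul hs, ← hK]
  exact sq_integral_mul_le zero_le_one (Continuous.intervalIntegrable (by fun_prop) _ _)
    (Continuous.intervalIntegrable (by fun_prop) _ _) (intervalIntegrable_eval_mul_eval _ _ _ _)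

theorem sq_eval_le_of_natDegree_le {d : ℕ} {r : ℝ[X]} (hr : r.natDegree ≤ d) {a b : ℝ}
    (hab : a ≠ b) :
    r.eval a ^ 2 ≤ ((d + 1) ^ 2 / (b - a)) * ∫ x in a..b, r.eval x ^ 2 := by
  have hba : b - a ≠ 0 := sub_ne_zero.mpr hab.symm
  set s := r.comp (C (b - a) * X + C a)
  have hs : s.natDegree ≤ d := by
    rwa [natDegree_comp, natDegree_linear hba, mul_one]
  have heval : ∀ x, s.eval x = r.eval ((b - a) * x + a) := by simp [s]
  have hintegral : ∫ x in (0 : ℝ)..1, s.eval x ^ 2 = (b - a)⁻¹ * ∫ x in a..b, r.eval x ^ 2 := by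
    simp_rw [heval]
    rw [intervalIntegral.integral_comp_mul_add (fun x => r.eval x ^ 2) hba, smul_eq_mul]
    simp
  have h := sq_eval_zero_le hs
  rw [hintegral, heval, mul_zero, zero_add] at h
  rwa [div_eq_mul_inv, mul_assoc]

theorem sq_eval_derivative_le {n : ℕ} {p : ℝ[X]} (hp : p.natDegree ≤ n) {a b : ℝ}
    (hab : a ≠ b) :
    (derivative p).eval a ^ 2 ≤ (n ^ 2 / (b - a)) * ∫ x in a..b, (derivative p).eval x ^ 2 := by
  cases n with
  | zero => simp [derivative_of_natDegree_zero (Nat.le_zero.mp hp)]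
  | succ d =>
    have hd : (derivative p).natDegree ≤ d := (natDegree_derivative_le p).trans (by omega)
    exact_mod_cast sq_eval_le_of_natDegree_le hd hab

/-- One-dimensional trace inequality for mixed polynomial order: for polynomials
`p`, `q` of degrees at most `n⁺`, `n⁻` on adjacent elements `[a,b]`, `[b,c]`,
the squared arithmetic average of the derivatives at the shared point `b` is
bounded by `N²/2` (with `N = max n⁺ n⁻`) times the sum of the scaled elementwise
`L²` norms of the derivatives. -/
theorem mixed_order_trace_inequality (np nm N : ℕ) (hN : N = max np nm)
    (a b c : ℝ) (hab : a < b) (hbc : b < c)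
    (p q : Polynomial ℝ) (hp : p.degree ≤ (np : ℕ∞)) (hq : q.degree ≤ (nm : ℕ∞)) :
    ((p.derivative.eval b + q.derivative.eval b) / 2) ^ 2 ≤
      ((N : ℝ) ^ 2 / 2) *
        ((1 / (b - a)) * (∫ x in a..b, (p.derivative.eval x) ^ 2)
          + (1 / (c - b)) * ∫ x in b..c, (q.derivative.eval x) ^ 2) := by
  have hpN : p.natDegree ≤ N := (natDegree_le_of_degree_le hp).trans (hN ▸ le_max_left _ _)
  have hqN : q.natDegree ≤ N := (natDegree_le_of_degree_le hq).trans (hN ▸ le_max_right _ _)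
  have hleft := sq_eval_derivative_le hpN hab.ne'
  rw [intervalIntegral.integral_symm, ← neg_sub b a, div_neg, neg_mul_neg] at hleft
  have hright := sq_eval_derivative_le hqN hbc.ne
  calc ((p.derivative.eval b + q.derivative.eval b) / 2) ^ 2
      ≤ (p.derivative.eval b ^ 2 + q.derivative.eval b ^ 2) / 2 := by
        linear_combination sq_nonneg (p.derivative.eval b - q.derivative.eval b) / 4
    _ ≤ _ := by linear_combination (hleft + hright) / 2
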